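/- Let H be completely additive with H(2) = 1, H(p) = H(p+1) for odd primes p. For n ≥ 3, the minimum of {m : H(m) = n} equals 5^(n/3) if n ≡ 0 mod 3, 9·5^((n-4)/3) if n ≡ 1 mod 3, and 3·5^((n-2)/3) if n ≡ 2 mod 3. -/
import Mathlib

private def L : ℕ → ℕ
  | 0 => 1
  | 1 => 2
  | 2 => 3
  | 3 => 5
  | 4 => 9
  | (n+5) => 5 * L (n+2)

private def c : ℕ → ℕ
  | 1 => 2
  | 2 => 3
  | 3 => 5
  | 4 => 9
  | _ => 0

private lemma Laux (n : ℕ) : L (n+5) = 5 * L (n+2) := by rfl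

private lemma L2 (a : ℕ) : L (3*a+2) = 3 * 5^a := by
  induction a with
  | zero => rfl
  | succ n ih =>
      have h : 3*(n+1)+2 = (3*n)+5 := by ring
      rw [h, Laux, ih, pow_succ]; ring

private lemma L3 (a : ℕ) : L (3*a+3) = 5 * 5^a := by
  induction a with
  | zero => rfl
  | succ n ih =>
      have h : 3*(n+1)+3 = (3*n+1)+5 := by ring
      have h2 : (3*n+1)+2 = 3*n+3 := by ring
      rw [h, Laux, h2, ih, pow_succ]; ring

private lemma L4 (a : ℕ) : L (3*a+4) = 9 * 5^a := by
  induction a with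
  | zero => rfl
  | succ n ih =>
      have h : 3*(n+1)+4 = (3*n+2)+5 := by ring
      have h2 : (3*n+2)+2 = 3*n+4 := by ring
      rw [h, Laux, h2, ih, pow_succ]; ring

private lemma Lclosed (m t : ℕ) (ht2 : 2 ≤ t) (ht4 : t ≤ 4) : L (3*m+t) = c t * 5^m := by
  interval_cases t
  · exact L2 m
  · exact L3 m
  · exact L4 m

private lemma Lrep (n : ℕ) (hn : 1 ≤ n) :
    ∃ a r, 1 ≤ r ∧ r ≤ 4 ∧ n = 3*a + r ∧ L n = c r * 5^a := by
  by_cases h1 : n = 1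
  · subst h1
    exact ⟨0, 1, le_rfl, by norm_num, by norm_num, by norm_num [L, c]⟩
  · have hn2 : 2 ≤ n := by omega
    obtain ⟨a, t, ha, ht2, ht4⟩ : ∃ a t, n = 3*a+t ∧ 2 ≤ t ∧ t ≤ 4 :=
      ⟨(n-2)/3, (n-2)%3 + 2, by omega, by omega, by omega⟩
    refine ⟨a, t, by omega, ht4, ha, ?_⟩
    rw [ha]
    exact Lclosed a t ht2 ht4

private lemma csuper' : ∀ r < 5, ∀ s < 5, 1 ≤ r → 1 ≤ s →
    c ((r+s-2)%3+2) * 5^((r+s-2)/3) ≤ c r * c s := by decide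

private lemma csuper : ∀ r s, 1 ≤ r → r ≤ 4 → 1 ≤ s → s ≤ 4 →
    c ((r+s-2)%3+2) * 5^((r+s-2)/3) ≤ c r * c s := by
  intro r s hr1 hr4 hs1 hs4
  exact csuper' r (by omega) s (by omega) hr1 hs1

private lemma Lsuper (j k : ℕ) (hj : 1 ≤ j) (hk : 1 ≤ k) : L (j+k) ≤ L j * L k := by
  obtain ⟨a, r, hr1, hr4, rfl, hLj⟩ := Lrep j hj
  obtain ⟨b, s, hs1, hs4, rfl, hLk⟩ := Lrep k hk
  rw [hLj, hLk]
  have hsum : 3*a+r + (3*b+s) = 3*(a+b+(r+s-2)/3) + ((r+s-2)%3+2) := by omega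
  rw [hsum, Lclosed _ _ (by omega) (by omega)]
  calc c ((r+s-2)%3+2) * 5^(a+b+(r+s-2)/3)
      = (c ((r+s-2)%3+2) * 5^((r+s-2)/3)) * (5^a * 5^b) := by
        rw [pow_add, pow_add]; ring
    _ ≤ (c r * c s) * (5^a * 5^b) :=
        Nat.mul_le_mul_right _ (csuper r s hr1 hr4 hs1 hs4)
    _ = c r * 5^a * (c s * 5^b) := by ring

private lemma Ldouble (n : ℕ) (hn : 1 ≤ n) : L (n+1) < 2 * L n := by
  obtain ⟨a, r, hr1, hr4, rfl, hL⟩ := Lrep n hn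
  rw [hL]
  have h5 : 0 < 5^a := pow_pos (by norm_num) a
  interval_cases r
  · have h : 3*a+1+1 = 3*a+2 := by ring
    rw [h, L2]
    show 3 * 5^a < 2 * (c 1 * 5^a)
    have : c 1 = 2 := rfl
    rw [this]; nlinarith
  · have h : 3*a+2+1 = 3*a+3 := by ring
    rw [h, L3]
    show 5 * 5^a < 2 * (c 2 * 5^a)
    have : c 2 = 3 := rfl
    rw [this]; nlinarith
  · have h : 3*a+3+1 = 3*a+4 := by ring
    rw [h, L4]
    show 9 * 5^a < 2 * (c 3 * 5^a)
    have : c 3 = 5 := rfl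
    rw [this]; nlinarith
  · have h : 3*a+4+1 = 3*(a+1)+2 := by ring
    rw [h, L2]
    show 3 * 5^(a+1) < 2 * (c 4 * 5^a)
    have : c 4 = 9 := rfl
    rw [this, pow_succ]; nlinarith

section Hfacts

variable (H : ℕ → ℕ)
    (hadd : ∀ a b : ℕ, 1 ≤ a → 1 ≤ b → H (a * b) = H a + H b)
    (h2 : H 2 = 1)
    (hodd : ∀ p : ℕ, p.Prime → p ≠ 2 → H p = H (p + 1))

include hadd in
private lemma H1 : H 1 = 0 := by
  have := hadd 1 1 le_rfl le_rfl
  simp at this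
  omega

include hadd h2 hodd in
private lemma H3 : H 3 = 2 := by
  have h3 := hodd 3 (by norm_num) (by norm_num)
  have h4 := hadd 2 2 (by norm_num) (by norm_num)
  norm_num at h3 h4
  omega

include hadd h2 hodd in
private lemma H5 : H 5 = 3 := by
  have h5 := hodd 5 (by norm_num) (by norm_num)
  have h6 := hadd 2 3 (by norm_num) (by norm_num)
  have h3 := H3 H hadd h2 hodd
  norm_num at h5 h6
  omega

include hadd h2 hodd in
private lemma Hpow5 (k : ℕ) : H (5^k) = 3*k := by
  induction k with
  | zero => simpa using H1 H hadd
  | succ n ih =>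
      have h : (5:ℕ)^(n+1) = 5 * 5^n := by rw [pow_succ]; ring
      rw [h, hadd 5 (5^n) (by norm_num) (Nat.one_le_pow n 5 (by norm_num)),
        H5 H hadd h2 hodd, ih]
      ring

include hadd h2 hodd in
private lemma Hpos : ∀ m, 2 ≤ m → 1 ≤ H m := by
  intro m
  induction m using Nat.strong_induction_on with
  | _ m ih =>
    intro hm
    by_cases hp : m.Prime
    · by_cases hm2 : m = 2
      · subst hm2; omega
      · have hoddm : Odd m := hp.odd_of_ne_two hm2
        have hm3 : 3 ≤ m := by
          rcases hoddm with ⟨t, ht⟩; omega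
        obtain ⟨t, ht⟩ := hoddm
        have hk : m + 1 = 2 * (t+1) := by omega
        have := hadd 2 (t+1) (by norm_num) (by omega)
        rw [hodd m hp hm2, hk, this, h2]
        omega
    · obtain ⟨a, ha, ha2, halt⟩ := Nat.exists_dvd_of_not_prime2 hm hp
      obtain ⟨b, rfl⟩ := ha
      have hb2 : 2 ≤ b := by
        rcases Nat.lt_or_ge b 2 with h | h
        · interval_cases b <;> omega
        · exact h
      rw [hadd a b (by omega) (by omega)]
      have := ih a halt ha2
      omega

include hadd h2 hodd in
private lemma Hlower : ∀ m, 2 ≤ m → L (H m) ≤ m := by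
  intro m
  induction m using Nat.strong_induction_on with
  | _ m ih =>
    intro hm
    by_cases hp : m.Prime
    · by_cases hm2 : m = 2
      · subst hm2; rw [h2]; rfl
      · have hoddm : Odd m := hp.odd_of_ne_two hm2
        obtain ⟨t, ht⟩ := hoddm
        have hm3 : 3 ≤ m := by omega
        set k := t + 1 with hkdef
        have hk : m + 1 = 2 * k := by omega
        have hk2 : 2 ≤ k := by omega
        have hklt : k < m := by omega
        have hHm : H m = H k + 1 := by
          rw [hodd m hp hm2, hk, hadd 2 k (by norm_num) (by omega), h2]
          omega
        have hkpos := Hpos H hadd h2 hodd k hk2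
        have hkl := ih k hklt hk2
        have := Ldouble (H k) hkpos
        rw [hHm]
        omega
    · obtain ⟨a, ha, ha2, halt⟩ := Nat.exists_dvd_of_not_prime2 hm hp
      obtain ⟨b, rfl⟩ := ha
      have hb2 : 2 ≤ b := by
        rcases Nat.lt_or_ge b 2 with h | h
        · interval_cases b <;> omega
        · exact h
      have hblt : b < a * b := by nlinarith
      rw [hadd a b (by omega) (by omega)]
      calc L (H a + H b) ≤ L (H a) * L (H b) :=
            Lsuper _ _ (Hpos H hadd h2 hodd a ha2) (Hpos H hadd h2 hodd b hb2)
        _ ≤ a * b := Nat.mul_le_mul (ih a halt ha2) (ih b hblt hb2)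

end Hfacts

theorem dedekind_height_min (H : ℕ → ℕ)
    (hadd : ∀ a b : ℕ, 1 ≤ a → 1 ≤ b → H (a * b) = H a + H b)
    (h2 : H 2 = 1)
    (hodd : ∀ p : ℕ, p.Prime → p ≠ 2 → H p = H (p + 1)) :
    ∀ n : ℕ, 3 ≤ n →
      (n % 3 = 0 → IsLeast {m : ℕ | 1 ≤ m ∧ H m = n} (5 ^ (n / 3))) ∧
      (n % 3 = 1 → IsLeast {m : ℕ | 1 ≤ m ∧ H m = n} (9 * 5 ^ ((n - 4) / 3))) ∧
      (n % 3 = 2 → IsLeast {m : ℕ | 1 ≤ m ∧ H m = n} (3 * 5 ^ ((n - 2) / 3))) := by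
  have h1 := H1 H hadd
  have h3 := H3 H hadd h2 hodd
  have h5 := H5 H hadd h2 hodd
  have hpow := Hpow5 H hadd h2 hodd
  have hlow := Hlower H hadd h2 hodd
  intro n hn
  have lower : ∀ m : ℕ, m ∈ {m : ℕ | 1 ≤ m ∧ H m = n} → L n ≤ m := by
    intro m hm
    obtain ⟨hm1, hHm⟩ := hm
    rcases eq_or_lt_of_le hm1 with h | h
    · exfalso; rw [← h] at hHm; omega
    · have := hlow m (by omega)
      rw [hHm] at this
      exact this
  refine ⟨?_, ?_, ?_⟩ <;> intro hmod
  · -- n % 3 = 0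
    set k := n / 3 with hkdef
    have hk1 : 1 ≤ k := by omega
    have hnk : n = 3*(k-1)+3 := by omega
    have hLn : L n = 5 ^ k := by
      rw [hnk, L3, ← pow_succ']
      congr 1
      omega
    constructor
    · refine ⟨Nat.one_le_pow _ _ (by norm_num), ?_⟩
      rw [hpow k]; omega
    · intro m hm
      have := lower m hm
      rw [hLn] at this
      exact this
  · -- n % 3 = 1
    set k := (n - 4) / 3 with hkdef
    have hnk : n = 3*k+4 := by omega
    have hLn : L n = 9 * 5 ^ k := by rw [hnk, L4]
    constructor
    · constructor
      · exact Nat.one_le_iff_ne_zero.mpr (by positivity)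
      · rw [show (9:ℕ) * 5^k = 3 * (3 * 5^k) by ring,
          hadd 3 (3 * 5^k) (by norm_num) (Nat.one_le_iff_ne_zero.mpr (by positivity)),
          hadd 3 (5^k) (by norm_num) (Nat.one_le_iff_ne_zero.mpr (by positivity)), h3, hpow k]
        omega
    · intro m hm
      have := lower m hm
      rw [hLn] at this
      exact this
  · -- n % 3 = 2
    set k := (n - 2) / 3 with hkdef
    have hnk : n = 3*k+2 := by omega
    have hLn : L n = 3 * 5 ^ k := by rw [hnk, L2]
    constructor
    · constructor
      · exact Nat.one_le_iff_ne_zero.mpr (by positivity)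
      · rw [hadd 3 (5^k) (by norm_num) (Nat.one_le_iff_ne_zero.mpr (by positivity)), h3, hpow k]
        omega
    · intro m hm
      have := lower m hm
      rw [hLn] at this
      exact this
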